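/- arXiv:2312.09616 — 4 statements merged into one kernel-verified Lean document; each statement's English description precedes it below -/
import Mathlib

section
/- Under assumptions (A2)–(A8), the optimal shifted costs satisfy the upper estimate limsup_{T→+∞} C_T(û_T,x,z) ≤ v_f(x) + v_b(z), where C_T(û_T,x,z) := ∫₀ᵀ w(ŷ_T(t),û_T(t)) dt = v(T,x,z) − T·v̄ is the shifted optimal cost of the finite-horizon problem. -/
open MeasureTheory Filter Topology Metric Set

noncomputable section

/-- Euclidean state/control spaces. -/
abbrev Euc (n : ℕ) := EuclideanSpace ℝ (Fin n)

/-- An admissible pair `(y,u)` on `[0,T]` for the dynamics `f` with control constraint set `Ω`: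
`u` is measurable, `Ω`-valued a.e. on `[0,T]`, and `y t = y 0 + ∫₀ᵗ f (y s) (u s) ds` on `[0,T]`. -/
def IsAdmissible {n p : ℕ} (f : Euc n → Euc p → Euc n) (Ω : Set (Euc p)) (T : ℝ)
    (y : ℝ → Euc n) (u : ℝ → Euc p) : Prop :=
  Measurable u ∧ (∀ᵐ t ∂(volume.restrict (Icc (0:ℝ) T)), u t ∈ Ω) ∧
  ∀ t ∈ Icc (0:ℝ) T, y t = y 0 + ∫ s in (0:ℝ)..t, f (y s) (u s)

/-- An admissible pair `(y,u)` on `[0,∞)` for the dynamics `f`. -/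
def IsAdmissibleInf {n p : ℕ} (f : Euc n → Euc p → Euc n) (Ω : Set (Euc p))
    (y : ℝ → Euc n) (u : ℝ → Euc p) : Prop :=
  Measurable u ∧ (∀ᵐ t ∂(volume.restrict (Ici (0:ℝ))), u t ∈ Ω) ∧
  ∀ t, 0 ≤ t → y t = y 0 + ∫ s in (0:ℝ)..t, f (y s) (u s)

/-- A class-K function: continuous, (strictly) increasing on `[0,∞)`, nonnegative, vanishing at `0`. -/
def IsClassK (α : ℝ → ℝ) : Prop :=
  ContinuousOn α (Ici 0) ∧ StrictMonoOn α (Ici 0) ∧ α 0 = 0 ∧ ∀ s ∈ Ici (0:ℝ), 0 ≤ α s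

/-- Strict dissipativity at `(ȳ,ū)` with supply rate `w`, (bounded) storage function `S` and
class-K function `α`. -/
def StrictlyDissipative {n p : ℕ} (f : Euc n → Euc p → Euc n) (Ω : Set (Euc p))
    (w : Euc n → Euc p → ℝ) (ybar : Euc n) (ubar : Euc p)
    (S : Euc n → ℝ) (α : ℝ → ℝ) : Prop :=
  (∃ M, ∀ x, |S x| ≤ M) ∧ IsClassK α ∧
  ∀ T > (0:ℝ), ∀ y u, IsAdmissible f Ω T y u →
    S (y T) + ∫ t in (0:ℝ)..T, α ‖(y t - ybar, u t - ubar)‖ ≤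
      S (y 0) + ∫ t in (0:ℝ)..T, w (y t) (u t)

/-- The value function `v(T,x,z)` of the finite-horizon problem. -/
def valueFn {n p : ℕ} (f : Euc n → Euc p → Euc n) (f0 : Euc n → Euc p → ℝ)
    (Ω : Set (Euc p)) (T : ℝ) (x z : Euc n) : ℝ :=
  sInf {c | ∃ y u, IsAdmissible f Ω T y u ∧ y 0 = x ∧ y T = z ∧
    c = ∫ t in (0:ℝ)..T, f0 (y t) (u t)}

/-- The value of the shifted infinite-horizon problem with dynamics `f`, running cost `w`
and initial state `x` (the cost of an admissible pair is the limit of its partial costs). -/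
def vInf {n p : ℕ} (f : Euc n → Euc p → Euc n) (Ω : Set (Euc p))
    (w : Euc n → Euc p → ℝ) (x : Euc n) : ℝ :=
  sInf {c | ∃ y u, IsAdmissibleInf f Ω y u ∧ y 0 = x ∧
    Tendsto (fun T => ∫ t in (0:ℝ)..T, w (y t) (u t)) atTop (𝓝 c)}

/-- Times at which `ybar` can be reached from `x` by an admissible pair for `f`. -/
def reachTimes {n p : ℕ} (f : Euc n → Euc p → Euc n) (Ω : Set (Euc p))
    (x ybar : Euc n) : Set ℝ :=
  {t | 0 ≤ t ∧ ∃ y u, IsAdmissible f Ω t y u ∧ y 0 = x ∧ y t = ybar}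

/-- The minimum time to reach `ybar` from `x` with the dynamics `f`. -/
def minTime {n p : ℕ} (f : Euc n → Euc p → Euc n) (Ω : Set (Euc p))
    (x ybar : Euc n) : ℝ :=
  sInf (reachTimes f Ω x ybar)


/-!
Along the forward optimal pair the shifted cost stays bounded, so strict dissipativity bounds
`∫ α ‖(y - ȳ, u - ū)‖` and forces the trajectory back into every neighbourhood of `ȳ` at arbitrarily
late times. Stopping it at such a time, when its cost is already within `ε` of `v_f(x)`, and closing
the gap to `ȳ` by a short minimum-time arc (A7, A8) gives a pair from `x` to `ȳ` of cost at most
`v_f(x) + ε`; the same construction for `-f`, reversed in time, gives a pair from `ȳ` to `z` of cost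
at most `v_b(z) + ε`. For every large `T`, concatenating the two with a rest at the steady state
`(ȳ, ū)`, which costs nothing, is a competitor on `[0, T]`, so `C_T ≤ v_f(x) + v_b(z) + 2ε`.
-/

open scoped Interval

section Regularity

variable {n p : ℕ} {f : Euc n → Euc p → Euc n} {Ω : Set (Euc p)} {T : ℝ}
  {y : ℝ → Euc n} {u : ℝ → Euc p}

theorem IsAdmissible.intervalIntegrable_comp_of_aestronglyMeasurable {E : Type*}
    [NormedAddCommGroup E] {g : Euc n → Euc p → E} (hg : Continuous (Function.uncurry g))
    (hΩ : IsCompact Ω) (had : IsAdmissible f Ω T y u) (hT : 0 ≤ T)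
    (hy : Bornology.IsBounded (y '' Icc 0 T))
    (hym : AEStronglyMeasurable y (volume.restrict (Ioc 0 T))) :
    IntervalIntegrable (fun t => g (y t) (u t)) volume 0 T := by
  obtain ⟨R, hR⟩ := hy.subset_closedBall 0
  obtain ⟨C, hC⟩ := ((isCompact_closedBall (0 : Euc n) R).prod hΩ).exists_bound_of_continuousOn
    hg.continuousOn
  rw [intervalIntegrable_iff_integrableOn_Ioc_of_le hT]
  refine Integrable.mono' (integrableOn_const (C := C) measure_Ioc_lt_top.ne enorm_ne_top)
    (hg.comp_aestronglyMeasurable (hym.prodMk had.1.aestronglyMeasurable)) ?_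
  filter_upwards [ae_restrict_of_ae_restrict_of_subset Ioc_subset_Icc_self had.2.1,
    ae_restrict_mem measurableSet_Ioc] with t hu ht
  exact hC (y t, u t) ⟨hR (mem_image_of_mem y (Ioc_subset_Icc_self ht)), hu⟩

theorem IsAdmissible.continuousOn_of_intervalIntegrable (had : IsAdmissible f Ω T y u) {τ : ℝ}
    (hτ : τ ∈ Icc 0 T) (hint : IntervalIntegrable (fun t => f (y t) (u t)) volume 0 τ) :
    ContinuousOn y (Icc 0 τ) := by
  have h := intervalIntegral.continuousOn_primitive_interval' hint left_mem_uIcc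
  rw [uIcc_of_le hτ.1] at h
  exact (continuousOn_const.add h).congr fun t ht => had.2.2 t ⟨ht.1, ht.2.trans hτ.2⟩

/-- The state equation does not say that `t ↦ f (y t) (u t)` is integrable: past the supremum `s`
of the times up to which it is, the integral in the state equation is the junk value `0`, so `y` is
frozen at `y 0` there. Hence `y` is measurable after all, and then the dynamics is integrable. -/
theorem IsAdmissible.intervalIntegrable_dynamics (hf : Continuous (Function.uncurry f))
    (hΩ : IsCompact Ω) (had : IsAdmissible f Ω T y u) (hT : 0 ≤ T)
    (hy : Bornology.IsBounded (y '' Icc 0 T)) :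
    IntervalIntegrable (fun t => f (y t) (u t)) volume 0 T := by
  set J := {t ∈ Icc 0 T | IntervalIntegrable (fun t => f (y t) (u t)) volume 0 t}
  have hJ0 : (0 : ℝ) ∈ J := ⟨left_mem_Icc.2 hT, IntervalIntegrable.refl⟩
  have hJT : BddAbove J := ⟨T, fun t ht => ht.1.2⟩
  set s := sSup J
  have hs : s ∈ Icc 0 T := ⟨le_csSup hJT hJ0, csSup_le ⟨0, hJ0⟩ fun t ht => ht.1.2⟩
  have hfrozen : EqOn y (fun _ => y 0) (Ioc s T) := fun t ht => by
    have ht0 : 0 ≤ t := hs.1.trans ht.1.le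
    have hint : ¬ IntervalIntegrable (fun t => f (y t) (u t)) volume 0 t :=
      fun h => (le_csSup hJT ⟨⟨ht0, ht.2⟩, h⟩).not_gt ht.1
    rw [had.2.2 t ⟨ht0, ht.2⟩, intervalIntegral.integral_undef hint, add_zero]
  have hcont : ContinuousOn y (Ico 0 s) := fun t ht => by
    obtain ⟨τ, hτ, htτ⟩ := exists_lt_of_lt_csSup ⟨0, hJ0⟩ ht.2
    refine (had.continuousOn_of_intervalIntegrable hτ.1 hτ.2 t ⟨ht.1, htτ.le⟩)
      |>.mono_of_mem_nhdsWithin ?_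
    exact mem_nhdsWithin.2 ⟨Iio τ, isOpen_Iio, htτ, fun r hr => ⟨hr.2.1, le_of_lt hr.1⟩⟩
  have hsplit : Ioc 0 T ⊆ Ico 0 s ∪ {s} ∪ Ioc s T := fun t ht => by
    rcases lt_trichotomy t s with h | h | h
    · exact Or.inl (Or.inl ⟨ht.1.le, h⟩)
    · exact Or.inl (Or.inr h)
    · exact Or.inr ⟨h, ht.2⟩
  by_contra hnot
  refine hnot (had.intervalIntegrable_comp_of_aestronglyMeasurable hf hΩ hT hy ?_)
  refine AEStronglyMeasurable.mono_set hsplit (aestronglyMeasurable_union_iff.2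
    ⟨aestronglyMeasurable_union_iff.2 ⟨?_, ?_⟩, ?_⟩)
  · exact hcont.aestronglyMeasurable measurableSet_Ico
  · exact (continuousOn_singleton y s).aestronglyMeasurable (measurableSet_singleton s)
  · exact (continuousOn_const.congr hfrozen).aestronglyMeasurable measurableSet_Ioc

theorem IsAdmissible.continuousOn (hf : Continuous (Function.uncurry f)) (hΩ : IsCompact Ω)
    (had : IsAdmissible f Ω T y u) (hT : 0 ≤ T) (hy : Bornology.IsBounded (y '' Icc 0 T)) :
    ContinuousOn y (Icc 0 T) :=
  had.continuousOn_of_intervalIntegrable (right_mem_Icc.2 hT)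
    (had.intervalIntegrable_dynamics hf hΩ hT hy)

end Regularity

section Steering

variable {n p : ℕ} {f : Euc n → Euc p → Euc n} {Ω : Set (Euc p)}

/-- With `Ω` compact, boundedness of the trajectory is what makes integrals along the pair genuine
integrals rather than junk values. -/
structure IsSteering (f : Euc n → Euc p → Euc n) (Ω : Set (Euc p)) (L : ℝ)
    (y : ℝ → Euc n) (u : ℝ → Euc p) (x x' : Euc n) : Prop where
  nonneg : 0 ≤ L
  admissible : IsAdmissible f Ω L y u
  start : y 0 = x
  finish : y L = x'
  bounded : Bornology.IsBounded (y '' Icc 0 L)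

theorem IsSteering.intervalIntegrable_comp {E : Type*} [NormedAddCommGroup E]
    {L : ℝ} {y : ℝ → Euc n} {u : ℝ → Euc p} {x x' : Euc n} (h : IsSteering f Ω L y u x x')
    (hf : Continuous (Function.uncurry f)) (hΩ : IsCompact Ω)
    {g : Euc n → Euc p → E} (hg : Continuous (Function.uncurry g)) :
    IntervalIntegrable (fun t => g (y t) (u t)) volume 0 L :=
  h.admissible.intervalIntegrable_comp_of_aestronglyMeasurable hg hΩ h.nonneg h.bounded
    (((h.admissible.continuousOn hf hΩ h.nonneg h.bounded).aestronglyMeasurable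
      measurableSet_Icc).mono_set Ioc_subset_Icc_self)

theorem IsAdmissibleInf.isSteering {y : ℝ → Euc n} {u : ℝ → Euc p}
    (had : IsAdmissibleInf f Ω y u) (hy : Bornology.IsBounded (y '' Ici 0)) {T : ℝ} (hT : 0 ≤ T) :
    IsSteering f Ω T y u (y 0) (y T) where
  nonneg := hT
  admissible := ⟨had.1, ae_restrict_of_ae_restrict_of_subset Icc_subset_Ici_self had.2.1,
    fun t ht => had.2.2 t ht.1⟩
  start := rfl
  finish := rfl
  bounded := hy.subset (image_mono Icc_subset_Ici_self)

theorem IsSteering.const {ybar : Euc n} {ubar : Euc p} (hfbar : f ybar ubar = 0)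
    (hubar : ubar ∈ Ω) {L : ℝ} (hL : 0 ≤ L) :
    IsSteering f Ω L (fun _ => ybar) (fun _ => ubar) ybar ybar where
  nonneg := hL
  admissible := ⟨measurable_const, Eventually.of_forall fun _ => hubar,
    fun _ _ => by simp [hfbar]⟩
  start := rfl
  finish := rfl
  bounded := (Bornology.isBounded_singleton (x := ybar)).subset (image_subset_iff.2 fun _ _ => rfl)

end Steering

section Glue

def glue {α : Type*} (a : ℝ) (g₁ g₂ : ℝ → α) (t : ℝ) : α :=
  if t ≤ a then g₁ t else g₂ (t - a)

variable {α : Type*} {a b t : ℝ} {g₁ g₂ : ℝ → α}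

theorem glue_of_le (h : t ≤ a) : glue a g₁ g₂ t = g₁ t := if_pos h

theorem glue_of_lt (h : a < t) : glue a g₁ g₂ t = g₂ (t - a) := if_neg h.not_ge

theorem glue_add (hb : 0 ≤ b) (hmatch : g₂ 0 = g₁ a) : glue a g₁ g₂ (a + b) = g₂ b := by
  rcases hb.eq_or_lt with rfl | hb
  · rw [add_zero, glue_of_le le_rfl, hmatch]
  · rw [glue_of_lt (by linarith), add_sub_cancel_left]

theorem glue_comp {β γ : Type*} (F : α → β → γ) {v₁ v₂ : ℝ → β} :
    (fun t => F (glue a g₁ g₂ t) (glue a v₁ v₂ t)) =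
      glue a (fun t => F (g₁ t) (v₁ t)) (fun t => F (g₂ t) (v₂ t)) := by
  funext t
  unfold glue
  split_ifs <;> rfl

theorem image_glue_subset :
    glue a g₁ g₂ '' Icc 0 (a + b) ⊆ g₁ '' Icc 0 a ∪ g₂ '' Icc 0 b := by
  rintro _ ⟨t, ht, rfl⟩
  rcases le_or_gt t a with h | h
  · exact Or.inl ⟨t, ⟨ht.1, h⟩, (glue_of_le h).symm⟩
  · exact Or.inr ⟨t - a, ⟨by linarith, by linarith [ht.2]⟩, (glue_of_lt h).symm⟩

variable {E : Type*} [NormedAddCommGroup E] {G₁ G₂ : ℝ → E}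

theorem intervalIntegrable_glue (ha : 0 ≤ a) (hb : 0 ≤ b)
    (h₁ : IntervalIntegrable G₁ volume 0 a) (h₂ : IntervalIntegrable G₂ volume 0 b) :
    IntervalIntegrable (glue a G₁ G₂) volume 0 (a + b) := by
  have h₂' : IntervalIntegrable (fun t => G₂ (t - a)) volume a (a + b) := by
    simpa [add_comm] using h₂.comp_sub_right a
  refine (h₁.congr fun t ht => ?_).trans (h₂'.congr fun t ht => ?_)
  · exact (glue_of_le ((uIoc_of_le ha ▸ ht).2)).symm
  · exact (glue_of_lt ((uIoc_of_le (le_add_of_nonneg_right hb) ▸ ht).1)).symm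

variable [NormedSpace ℝ E]

theorem integral_glue_of_le (ht : 0 ≤ t) (hta : t ≤ a) :
    ∫ s in 0..t, glue a G₁ G₂ s = ∫ s in 0..t, G₁ s :=
  intervalIntegral.integral_congr_ae (Eventually.of_forall fun _ hs =>
    glue_of_le (((uIoc_of_le ht) ▸ hs).2.trans hta))

theorem integral_glue (ha : 0 ≤ a) (hb : 0 ≤ b)
    (h₁ : IntervalIntegrable G₁ volume 0 a) (h₂ : IntervalIntegrable G₂ volume 0 b) :
    ∫ t in 0..(a + b), glue a G₁ G₂ t = (∫ t in 0..a, G₁ t) + ∫ t in 0..b, G₂ t := by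
  have hab := intervalIntegrable_glue ha hb h₁ h₂
  have hab' : a ≤ a + b := le_add_of_nonneg_right hb
  have ha' : a ∈ [[0, a + b]] := mem_uIcc_of_le ha hab'
  have htail : ∫ t in a..(a + b), glue a G₁ G₂ t = ∫ t in 0..b, G₂ t := by
    rw [intervalIntegral.integral_congr_ae (g := fun t => G₂ (t - a)) (Eventually.of_forall
      fun t ht => glue_of_lt ((uIoc_of_le hab' ▸ ht).1)), intervalIntegral.integral_comp_sub_right,
      sub_self, add_sub_cancel_left]
  rw [← intervalIntegral.integral_add_adjacent_intervals
      (hab.mono_set (uIcc_subset_uIcc_left ha')) (hab.mono_set (uIcc_subset_uIcc_right ha')),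
    integral_glue_of_le ha le_rfl, htail]

end Glue

theorem ae_restrict_Icc_comp_sub_right {P : ℝ → Prop} {b : ℝ}
    (h : ∀ᵐ s ∂(volume.restrict (Icc 0 b)), P s) (a : ℝ) :
    ∀ᵐ t ∂(volume.restrict (Icc a (a + b))), P (t - a) := by
  have := ((measurePreserving_sub_right volume a).restrict_preimage
    measurableSet_Icc).quasiMeasurePreserving.ae h
  rwa [preimage_sub_const_Icc, zero_add, add_comm] at this

theorem ae_restrict_Icc_comp_sub_left {P : ℝ → Prop} {L : ℝ}
    (h : ∀ᵐ s ∂(volume.restrict (Icc 0 L)), P s) :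
    ∀ᵐ t ∂(volume.restrict (Icc 0 L)), P (L - t) := by
  have := ((Measure.measurePreserving_sub_left volume L).restrict_preimage
    measurableSet_Icc).quasiMeasurePreserving.ae h
  rwa [preimage_const_sub_Icc, sub_zero, sub_self] at this

section Concatenation

variable {n p : ℕ} {f : Euc n → Euc p → Euc n} {Ω : Set (Euc p)} {a b : ℝ}
  {y₁ y₂ : ℝ → Euc n} {u₁ u₂ : ℝ → Euc p}

theorem IsAdmissible.glue (ha : 0 ≤ a) (h₁ : IsAdmissible f Ω a y₁ u₁)
    (h₂ : IsAdmissible f Ω b y₂ u₂) (hmatch : y₂ 0 = y₁ a)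
    (hi₁ : IntervalIntegrable (fun t => f (y₁ t) (u₁ t)) volume 0 a)
    (hi₂ : IntervalIntegrable (fun t => f (y₂ t) (u₂ t)) volume 0 b) :
    IsAdmissible f Ω (a + b) (glue a y₁ y₂) (glue a u₁ u₂) := by
  refine ⟨Measurable.ite measurableSet_Iic h₁.1 (h₂.1.comp (measurable_sub_const a)), ?_,
    fun t ht => ?_⟩
  · have hsub : Icc 0 (a + b) ⊆ Icc 0 a ∪ Ioc a (a + b) := fun t ht =>
      (le_or_gt t a).imp (fun h => ⟨ht.1, h⟩) (fun h => ⟨h, ht.2⟩)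
    refine ae_restrict_of_ae_restrict_of_subset hsub ((ae_restrict_union_iff _ _ _).2 ⟨?_, ?_⟩)
    · filter_upwards [h₁.2.1, ae_restrict_mem measurableSet_Icc] with t hu ht
      rwa [glue_of_le ht.2]
    · filter_upwards [ae_restrict_of_ae_restrict_of_subset Ioc_subset_Icc_self
        (ae_restrict_Icc_comp_sub_right h₂.2.1 a), ae_restrict_mem measurableSet_Ioc] with t hu ht
      rwa [glue_of_lt ht.1]
  rw [glue_comp f, glue_of_le ha]
  rcases le_or_gt t a with hta | hta
  · rw [glue_of_le hta, integral_glue_of_le ht.1 hta]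
    exact h₁.2.2 t ⟨ht.1, hta⟩
  · obtain ⟨c, hc, rfl⟩ : ∃ c, 0 < c ∧ t = a + c := ⟨t - a, by linarith, by ring⟩
    have hcb : c ≤ b := by linarith [ht.2]
    rw [glue_add hc.le hmatch, integral_glue ha hc.le hi₁
        (hi₂.mono_set (uIcc_subset_uIcc_left (mem_uIcc_of_le hc.le hcb))),
      h₂.2.2 c ⟨hc.le, hcb⟩, hmatch, h₁.2.2 a ⟨ha, le_rfl⟩, add_assoc]

theorem IsAdmissible.reverse {L : ℝ} {y : ℝ → Euc n} {u : ℝ → Euc p}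
    (had : IsAdmissible (fun a q => -f a q) Ω L y u) (hL : 0 ≤ L)
    (hint : IntervalIntegrable (fun t => f (y t) (u t)) volume 0 L) :
    IsAdmissible f Ω L (fun t => y (L - t)) (fun t => u (L - t)) := by
  refine ⟨had.1.comp (measurable_const_sub L), ae_restrict_Icc_comp_sub_left had.2.1,
    fun t ht => ?_⟩
  have hLt : L - t ∈ [[0, L]] := mem_uIcc_of_le (by linarith [ht.2]) (by linarith [ht.1])
  have hsplit := intervalIntegral.integral_interval_sub_left hint
    (hint.mono_set (uIcc_subset_uIcc_left hLt))
  have hrev := intervalIntegral.integral_comp_sub_left (a := 0) (b := t)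
    (fun s => f (y s) (u s)) L
  have e₁ := had.2.2 (L - t) ⟨by linarith [ht.2], by linarith [ht.1]⟩
  have e₂ := had.2.2 L ⟨hL, le_rfl⟩
  simp only [intervalIntegral.integral_neg] at e₁ e₂
  simp only [sub_zero] at hrev ⊢
  rw [hrev, ← hsplit, e₁, e₂]
  abel

variable {x x' x'' : Euc n}

theorem IsSteering.trans (hf : Continuous (Function.uncurry f)) (hΩ : IsCompact Ω)
    (h₁ : IsSteering f Ω a y₁ u₁ x x') (h₂ : IsSteering f Ω b y₂ u₂ x' x'') :
    IsSteering f Ω (a + b) (glue a y₁ y₂) (glue a u₁ u₂) x x'' where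
  nonneg := add_nonneg h₁.nonneg h₂.nonneg
  admissible := h₁.admissible.glue h₁.nonneg h₂.admissible
    (h₂.start.trans h₁.finish.symm) (h₁.intervalIntegrable_comp hf hΩ hf)
    (h₂.intervalIntegrable_comp hf hΩ hf)
  start := (glue_of_le h₁.nonneg).trans h₁.start
  finish := (glue_add h₂.nonneg (h₂.start.trans h₁.finish.symm)).trans h₂.finish
  bounded := (h₁.bounded.union h₂.bounded).subset image_glue_subset

theorem IsSteering.integral_trans {E : Type*} [NormedAddCommGroup E] [NormedSpace ℝ E]
    (hf : Continuous (Function.uncurry f)) (hΩ : IsCompact Ω) {x₁ x₂ : Euc n}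
    (h₁ : IsSteering f Ω a y₁ u₁ x x₁) (h₂ : IsSteering f Ω b y₂ u₂ x₂ x'')
    {g : Euc n → Euc p → E} (hg : Continuous (Function.uncurry g)) :
    ∫ t in 0..(a + b), g (glue a y₁ y₂ t) (glue a u₁ u₂ t) =
      (∫ t in 0..a, g (y₁ t) (u₁ t)) + ∫ t in 0..b, g (y₂ t) (u₂ t) := by
  rw [glue_comp g]
  exact integral_glue h₁.nonneg h₂.nonneg (h₁.intervalIntegrable_comp hf hΩ hg)
    (h₂.intervalIntegrable_comp hf hΩ hg)

theorem IsSteering.reverse {L : ℝ} {y : ℝ → Euc n} {u : ℝ → Euc p}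
    (hf : Continuous (Function.uncurry f)) (hΩ : IsCompact Ω)
    (h : IsSteering (fun a q => -f a q) Ω L y u x x') :
    IsSteering f Ω L (fun t => y (L - t)) (fun t => u (L - t)) x' x where
  nonneg := h.nonneg
  admissible := h.admissible.reverse h.nonneg (h.intervalIntegrable_comp hf.neg hΩ hf)
  start := by simpa using h.finish
  finish := by simpa using h.start
  bounded := h.bounded.subset <| by
    rintro _ ⟨t, ht, rfl⟩
    exact ⟨L - t, ⟨by linarith [ht.2], by linarith [ht.1]⟩, rfl⟩

theorem integral_comp_sub_left_self {E : Type*} [NormedAddCommGroup E] [NormedSpace ℝ E]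
    (g : Euc n → Euc p → E) (y : ℝ → Euc n) (u : ℝ → Euc p) (L : ℝ) :
    ∫ t in 0..L, g (y (L - t)) (u (L - t)) = ∫ t in 0..L, g (y t) (u t) := by
  simpa using intervalIntegral.integral_comp_sub_left (a := 0) (b := L) (fun s => g (y s) (u s)) L

end Concatenation

theorem frequently_lt_of_integral_le {g : ℝ → ℝ} {C ε : ℝ}
    (hg : ∀ T, 0 ≤ T → IntervalIntegrable g volume 0 T) (hg0 : ∀ t, 0 ≤ g t)
    (hC : ∀ᶠ T in atTop, ∫ t in 0..T, g t ≤ C) (hε : 0 < ε) : ∃ᶠ t in atTop, g t < ε := by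
  by_contra hfin
  simp only [not_frequently, not_lt] at hfin
  obtain ⟨N, hN⟩ := eventually_atTop.1 (hfin.and (eventually_ge_atTop 0))
  have hN0 : 0 ≤ N := (hN N le_rfl).2
  have hgrow : ∀ T ≥ N, (T - N) * ε ≤ ∫ t in 0..T, g t := fun T hT => by
    have hNT : N ∈ [[0, T]] := mem_uIcc_of_le hN0 hT
    have hgT := hg T (hN0.trans hT)
    rw [← intervalIntegral.integral_add_adjacent_intervals
      (hgT.mono_set (uIcc_subset_uIcc_left hNT)) (hgT.mono_set (uIcc_subset_uIcc_right hNT))]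
    have hhead : 0 ≤ ∫ t in 0..N, g t := intervalIntegral.integral_nonneg hN0 fun t _ => hg0 t
    have htail := intervalIntegral.integral_mono_on hT intervalIntegrable_const
      (hgT.mono_set (uIcc_subset_uIcc_right hNT)) fun t ht => (hN t ht.1).1
    rw [intervalIntegral.integral_const, smul_eq_mul] at htail
    linarith
  have hlarge : Tendsto (fun T => (T - N) * ε) atTop atTop :=
    (tendsto_atTop_add_const_right _ (-N) tendsto_id).atTop_mul_const hε
  obtain ⟨T, hCT, hTC, hTN⟩ :=
    (hC.and ((hlarge.eventually_gt_atTop C).and (eventually_ge_atTop N))).exists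
  linarith [hgrow T hTN]

section Dissipativity

variable {n p : ℕ} {α : ℝ → ℝ}

theorem IsClassK.pos (hα : IsClassK α) {δ : ℝ} (hδ : 0 < δ) : 0 < α δ :=
  hα.2.2.1 ▸ hα.2.1 self_mem_Ici hδ.le hδ

theorem IsClassK.continuous_rate (hα : IsClassK α) (ybar : Euc n) (ubar : Euc p) :
    Continuous (Function.uncurry fun (a : Euc n) (q : Euc p) => α ‖(a - ybar, q - ubar)‖) :=
  hα.1.comp_continuous (by fun_prop) fun _ => norm_nonneg _

theorem IsClassK.frequently_norm_sub_lt (hα : IsClassK α) {y : ℝ → Euc n} {u : ℝ → Euc p}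
    {ybar : Euc n} {ubar : Euc p} {C δ : ℝ}
    (hint : ∀ T, 0 ≤ T → IntervalIntegrable (fun t => α ‖(y t - ybar, u t - ubar)‖) volume 0 T)
    (hC : ∀ᶠ T in atTop, ∫ t in 0..T, α ‖(y t - ybar, u t - ubar)‖ ≤ C) (hδ : 0 < δ) :
    ∃ᶠ t in atTop, ‖y t - ybar‖ < δ := by
  refine (frequently_lt_of_integral_le hint (fun t => hα.2.2.2 _ (norm_nonneg _)) hC
    (hα.pos hδ)).mono fun t ht => ?_
  by_contra! h
  exact ht.not_ge (hα.2.1.monotoneOn hδ.le (norm_nonneg _)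
    (h.trans (norm_fst_le (y t - ybar, u t - ubar))))

variable {f : Euc n → Euc p → Euc n} {Ω : Set (Euc p)} {w : Euc n → Euc p → ℝ}
  {ybar : Euc n} {ubar : Euc p} {S : Euc n → ℝ}

theorem StrictlyDissipative.exists_integral_le (hdis : StrictlyDissipative f Ω w ybar ubar S α) :
    ∃ C, ∀ T > 0, ∀ y u, IsAdmissible f Ω T y u →
      ∫ t in 0..T, α ‖(y t - ybar, u t - ubar)‖ ≤ C + ∫ t in 0..T, w (y t) (u t) := by
  obtain ⟨⟨M, hM⟩, -, hineq⟩ := hdis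
  refine ⟨2 * M, fun T hT y u had => ?_⟩
  linarith [hineq T hT y u had, abs_le.1 (hM (y 0)), abs_le.1 (hM (y T))]

variable {y : ℝ → Euc n} {u : ℝ → Euc p} {M δ : ℝ}

theorem StrictlyDissipative.frequently_norm_sub_lt (hf : Continuous (Function.uncurry f))
    (hΩ : IsCompact Ω) (hdis : StrictlyDissipative f Ω w ybar ubar S α)
    (had : IsAdmissibleInf f Ω y u) (hy : Bornology.IsBounded (y '' Ici 0))
    (hM : ∀ T, 0 ≤ T → ∫ t in 0..T, w (y t) (u t) ≤ M) (hδ : 0 < δ) :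
    ∃ᶠ t in atTop, ‖y t - ybar‖ < δ := by
  obtain ⟨C, hC⟩ := hdis.exists_integral_le
  refine hdis.2.1.frequently_norm_sub_lt (C := C + M) (fun T hT =>
    (had.isSteering hy hT).intervalIntegrable_comp hf hΩ (hdis.2.1.continuous_rate ybar ubar))
    ?_ hδ
  filter_upwards [eventually_gt_atTop 0] with T hT
  linarith [hC T hT y u (had.isSteering hy hT.le).admissible, hM T hT.le]

/-- Dissipativity is only assumed for `f`, so it is applied to the time reversal of `(y, u)` on each
`[0, T]`. -/
theorem StrictlyDissipative.frequently_norm_sub_lt_of_neg (hf : Continuous (Function.uncurry f))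
    (hΩ : IsCompact Ω) (hdis : StrictlyDissipative f Ω w ybar ubar S α)
    (had : IsAdmissibleInf (fun a q => -f a q) Ω y u) (hy : Bornology.IsBounded (y '' Ici 0))
    (hM : ∀ T, 0 ≤ T → ∫ t in 0..T, w (y t) (u t) ≤ M) (hδ : 0 < δ) :
    ∃ᶠ t in atTop, ‖y t - ybar‖ < δ := by
  obtain ⟨C, hC⟩ := hdis.exists_integral_le
  refine hdis.2.1.frequently_norm_sub_lt (C := C + M) (fun T hT =>
    (had.isSteering hy hT).intervalIntegrable_comp hf.neg hΩ (hdis.2.1.continuous_rate ybar ubar))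
    ?_ hδ
  filter_upwards [eventually_gt_atTop 0] with T hT
  have hrev := hC T hT _ _ ((had.isSteering hy hT.le).reverse hf hΩ).admissible
  have hα := integral_comp_sub_left_self (fun a q => α ‖(a - ybar, q - ubar)‖) y u T
  rw [hα, integral_comp_sub_left_self w] at hrev
  linarith [hM T hT.le]

end Dissipativity

theorem intervalIntegral_sub_const {F : ℝ → ℝ} {T : ℝ} (hF : IntervalIntegrable F volume 0 T)
    (c : ℝ) : ∫ t in 0..T, (F t - c) = (∫ t in 0..T, F t) - T * c := by
  rw [intervalIntegral.integral_sub hF intervalIntegrable_const, intervalIntegral.integral_const,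
    smul_eq_mul, sub_zero]

theorem minTime_nonneg {n p : ℕ} (f : Euc n → Euc p → Euc n) (Ω : Set (Euc p)) (x ybar : Euc n) :
    0 ≤ minTime f Ω x ybar :=
  Real.sInf_nonneg fun _ ht => ht.1

section Turnpike

variable {n p : ℕ} {f : Euc n → Euc p → Euc n} {Ω : Set (Euc p)} {w : Euc n → Euc p → ℝ}
  {ybar : Euc n} {ubar : Euc p}

theorem eventually_exists_isSteering_integral_le (hw : Continuous (Function.uncurry w))
    {r r₂ Kr : ℝ} (hr : 0 < r) (hτ₀ : minTime f Ω ybar ybar = 0)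
    (hτ : ContinuousWithinAt (fun x' => minTime f Ω x' ybar) (ball ybar r) ybar) (hr₂ : 0 < r₂)
    (harc : ∀ x' ∈ closedBall ybar r₂, ∃ y' u',
      IsAdmissible f Ω (minTime f Ω x' ybar) y' u' ∧ y' 0 = x' ∧
      y' (minTime f Ω x' ybar) = ybar ∧
      ∀ t ∈ Icc (0:ℝ) (minTime f Ω x' ybar), ‖y' t - ybar‖ + ‖u' t - ubar‖ ≤ Kr)
    {ε : ℝ} (hε : 0 < ε) :
    ∀ᶠ x' in 𝓝 ybar, ∃ L y u, IsSteering f Ω L y u x' ybar ∧ ∫ t in 0..L, w (y t) (u t) ≤ ε := by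
  obtain ⟨C, hC⟩ := ((isCompact_closedBall ybar Kr).prod
    (isCompact_closedBall ubar Kr)).exists_bound_of_continuousOn hw.continuousOn
  set W := max C 1
  have hW : 0 < W := lt_max_of_lt_right one_pos
  have hτ' : Tendsto (fun x' => minTime f Ω x' ybar) (𝓝 ybar) (𝓝 0) :=
    hτ₀ ▸ hτ.continuousAt (ball_mem_nhds ybar hr)
  filter_upwards [closedBall_mem_nhds ybar hr₂, hτ'.eventually (gt_mem_nhds (div_pos hε hW))]
    with x' hx' hτx
  obtain ⟨y, u, had, hy0, hyL, hbd⟩ := harc x' hx'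
  have hL := minTime_nonneg f Ω x' ybar
  have hnear : ∀ t ∈ Icc 0 (minTime f Ω x' ybar), ‖y t - ybar‖ ≤ Kr ∧ ‖u t - ubar‖ ≤ Kr :=
    fun t ht => ⟨by linarith [hbd t ht, norm_nonneg (u t - ubar)],
      by linarith [hbd t ht, norm_nonneg (y t - ybar)]⟩
  refine ⟨_, y, u, ⟨hL, had, hy0, hyL, (isBounded_closedBall (x := ybar) (r := Kr)).subset ?_⟩, ?_⟩
  · rintro _ ⟨t, ht, rfl⟩
    exact mem_closedBall_iff_norm.2 (hnear t ht).1
  have hbound : ∀ t ∈ Ι 0 (minTime f Ω x' ybar), ‖w (y t) (u t)‖ ≤ W := fun t ht => by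
    have ht' := Ioc_subset_Icc_self (uIoc_of_le hL ▸ ht)
    exact (hC (y t, u t) ⟨mem_closedBall_iff_norm.2 (hnear t ht').1,
      mem_closedBall_iff_norm.2 (hnear t ht').2⟩).trans (le_max_left _ _)
  calc ∫ t in 0..minTime f Ω x' ybar, w (y t) (u t)
      ≤ W * |minTime f Ω x' ybar - 0| :=
        (Real.le_norm_self _).trans (intervalIntegral.norm_integral_le_of_norm_le_const hbound)
    _ ≤ W * (ε / W) := by
        rw [sub_zero, abs_of_nonneg hL]
        exact mul_le_mul_of_nonneg_left hτx.le hW.le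
    _ = ε := mul_div_cancel₀ ε hW.ne'

theorem exists_isSteering_integral_le (hf : Continuous (Function.uncurry f)) (hΩ : IsCompact Ω)
    (hw : Continuous (Function.uncurry w)) {y : ℝ → Euc n} {u : ℝ → Euc p} {V : ℝ}
    (had : IsAdmissibleInf f Ω y u) (hy : Bornology.IsBounded (y '' Ici 0))
    (hV : Tendsto (fun T => ∫ t in 0..T, w (y t) (u t)) atTop (𝓝 V))
    (hrec : ∀ δ > 0, ∃ᶠ t in atTop, ‖y t - ybar‖ < δ)
    (harcs : ∀ ε > 0, ∀ᶠ x' in 𝓝 ybar, ∃ L y' u',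
      IsSteering f Ω L y' u' x' ybar ∧ ∫ t in 0..L, w (y' t) (u' t) ≤ ε)
    {ε : ℝ} (hε : 0 < ε) :
    ∃ L y' u', IsSteering f Ω L y' u' (y 0) ybar ∧ ∫ t in 0..L, w (y' t) (u' t) ≤ V + ε := by
  obtain ⟨δ, hδ, hnear⟩ := Metric.eventually_nhds_iff.1 (harcs (ε / 2) (half_pos hε))
  obtain ⟨T, ⟨hcost, hT⟩, hyT⟩ := (((hV.eventually (gt_mem_nhds (by linarith :
    V < V + ε / 2))).and (eventually_ge_atTop 0)).and_frequently (hrec δ hδ)).exists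
  obtain ⟨L, y', u', hst, hcost'⟩ := hnear (by rwa [dist_eq_norm])
  refine ⟨T + L, glue T y y', glue T u u', (had.isSteering hy hT).trans hf hΩ hst, ?_⟩
  rw [(had.isSteering hy hT).integral_trans hf hΩ hst hw]
  linarith

variable {f0 : Euc n → Euc p → ℝ} {S : Euc n → ℝ} {α : ℝ → ℝ}

theorem StrictlyDissipative.bddBelow_costs (hdis : StrictlyDissipative f Ω w ybar ubar S α)
    (hw : w = fun y u => f0 y u - f0 ybar ubar) {T : ℝ} (hT : 0 < T) (x z : Euc n) :
    BddBelow {c | ∃ y u, IsAdmissible f Ω T y u ∧ y 0 = x ∧ y T = z ∧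
      c = ∫ t in (0:ℝ)..T, f0 (y t) (u t)} := by
  obtain ⟨C, hC⟩ := hdis.exists_integral_le
  refine ⟨min 0 (T * f0 ybar ubar - C), ?_⟩
  rintro _ ⟨y, u, had, -, -, rfl⟩
  by_cases hi : IntervalIntegrable (fun t => f0 (y t) (u t)) volume 0 T
  · have hrate : 0 ≤ ∫ t in 0..T, α ‖(y t - ybar, u t - ubar)‖ :=
      intervalIntegral.integral_nonneg hT.le fun t _ => hdis.2.1.2.2.2 _ (norm_nonneg _)
    have hdiss := hC T hT y u had
    rw [hw, intervalIntegral_sub_const hi] at hdiss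
    exact min_le_of_right_le (by linarith)
  · rw [intervalIntegral.integral_undef hi]
    exact min_le_left _ _

theorem integral_le_add_of_integral_eq_valueFn (hf : Continuous (Function.uncurry f))
    (hΩ : IsCompact Ω) (hf0 : Continuous (Function.uncurry f0))
    (hdis : StrictlyDissipative f Ω w ybar ubar S α) (hw : w = fun y u => f0 y u - f0 ybar ubar)
    (hfbar : f ybar ubar = 0) (hubar : ubar ∈ Ω) {T L₁ L₂ : ℝ} {x z : Euc n}
    {y y₁ y₂ : ℝ → Euc n} {u u₁ u₂ : ℝ → Euc p} (hT : 0 < T) (hopt : IsSteering f Ω T y u x z)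
    (hval : ∫ t in (0:ℝ)..T, f0 (y t) (u t) = valueFn f f0 Ω T x z) (hL : L₁ + L₂ ≤ T)
    (h₁ : IsSteering f Ω L₁ y₁ u₁ x ybar) (h₂ : IsSteering f Ω L₂ y₂ u₂ ybar z) :
    ∫ t in (0:ℝ)..T, w (y t) (u t) ≤
      (∫ t in 0..L₁, w (y₁ t) (u₁ t)) + ∫ t in 0..L₂, w (y₂ t) (u₂ t) := by
  have hwc : Continuous (Function.uncurry w) := hw ▸ hf0.sub continuous_const
  obtain ⟨d, hd, rfl⟩ : ∃ d ≥ 0, T = L₁ + d + L₂ := ⟨T - L₁ - L₂, by linarith, by ring⟩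
  have hrest : IsSteering f Ω d (fun _ => ybar) (fun _ => ubar) ybar ybar :=
    IsSteering.const hfbar hubar hd
  have h₁' := h₁.trans hf hΩ hrest
  have h := h₁'.trans hf hΩ h₂
  have hle : valueFn f f0 Ω _ x z ≤ _ :=
    csInf_le (hdis.bddBelow_costs hw hT x z) ⟨_, _, h.admissible, h.start, h.finish, rfl⟩
  have hsplit := h₁'.integral_trans hf hΩ h₂ hwc
  rw [h₁.integral_trans hf hΩ hrest hwc] at hsplit
  subst hw
  simp only [sub_self, intervalIntegral.integral_zero, add_zero] at hsplit
  rw [intervalIntegral_sub_const (h.intervalIntegrable_comp hf hΩ hf0)] at hsplit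
  rw [intervalIntegral_sub_const (hopt.intervalIntegrable_comp hf hΩ hf0), hval]
  linarith

end Turnpike

theorem shifted_cost_upper_estimate_general
    {n pp : ℕ}
    (f : Euc n → Euc pp → Euc n) (f0 : Euc n → Euc pp → ℝ)
    (Ω : Set (Euc pp))
    -- (A1) regularity of the data
    (hf : ContDiff ℝ 1 (Function.uncurry f))
    (hf0 : ContDiff ℝ 1 (Function.uncurry f0))
    (hΩcpt : IsCompact Ω)
    -- static problem and its unique minimizer
    (ybar : Euc n) (ubar : Euc pp)
    (hfbar : f ybar ubar = 0)
    -- shifted cost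
    (w : Euc n → Euc pp → ℝ) (hwdef : w = fun y u => f0 y u - f0 ybar ubar)
    (x z : Euc n)
    -- (A2): existence and uniqueness of optimal solutions
    (T0 : ℝ)
    (yT : ℝ → ℝ → Euc n) (uT : ℝ → ℝ → Euc pp)
    (yf : ℝ → Euc n) (uf : ℝ → Euc pp) (yb : ℝ → Euc n) (ub : ℝ → Euc pp)
    (hoptT : ∀ T, T0 ≤ T → IsAdmissible f Ω T (yT T) (uT T) ∧ yT T 0 = x ∧ yT T T = z ∧
      (∫ t in (0:ℝ)..T, f0 (yT T t) (uT T t)) = valueFn f f0 Ω T x z)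
    (hoptf : IsAdmissibleInf f Ω yf uf ∧ yf 0 = x ∧
      Tendsto (fun T => ∫ t in (0:ℝ)..T, w (yf t) (uf t)) atTop (𝓝 (vInf f Ω w x)))
    (hoptb : IsAdmissibleInf (fun a b => -f a b) Ω yb ub ∧ yb 0 = z ∧
      Tendsto (fun T => ∫ t in (0:ℝ)..T, w (yb t) (ub t)) atTop
        (𝓝 (vInf (fun a b => -f a b) Ω w z)))
    -- (A3): uniform boundedness of the optimal trajectories
    (b : ℝ)
    (hbndT : ∀ T, T0 ≤ T → ∀ t ∈ Icc (0:ℝ) T, ‖yT T t‖ ≤ b)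
    (hbndf : ∀ t, 0 ≤ t → ‖yf t‖ ≤ b)
    (hbndb : ∀ t, 0 ≤ t → ‖yb t‖ ≤ b)
    -- (A4): uniform boundedness of the optimal (shifted) costs
    (M : ℝ)
    (hcstT : ∀ T, T0 ≤ T → |∫ t in (0:ℝ)..T, w (yT T t) (uT T t)| ≤ M)
    (hcstf : ∀ T, 0 ≤ T → |∫ t in (0:ℝ)..T, w (yf t) (uf t)| ≤ M)
    (hcstb : ∀ T, 0 ≤ T → |∫ t in (0:ℝ)..T, w (yb t) (ub t)| ≤ M)
    -- (A5): the static control is interior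
    (hubar : ubar ∈ interior Ω)
    -- (A6): strict dissipativity
    (S : Euc n → ℝ) (α : ℝ → ℝ)
    (hdis : StrictlyDissipative f Ω w ybar ubar S α)
    -- (A7): minimum time functions are finite (and attained) near ȳ, vanish and are continuous at ȳ
    (r : ℝ) (hr : 0 < r)
    (hτf0 : minTime f Ω ybar ybar = 0)
    (hτb0 : minTime (fun a b => -f a b) Ω ybar ybar = 0)
    (hτfcont : ContinuousWithinAt (fun x' => minTime f Ω x' ybar) (ball ybar r) ybar)
    (hτbcont : ContinuousWithinAt (fun x' => minTime (fun a b => -f a b) Ω x' ybar)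
      (ball ybar r) ybar)
    -- (A8): local boundedness of the minimum time trajectories and controls near the turnpike
    (r2 Kr : ℝ) (hr2 : 0 < r2)
    (hA8f : ∀ x' ∈ closedBall ybar r2, ∃ y' u',
      IsAdmissible f Ω (minTime f Ω x' ybar) y' u' ∧ y' 0 = x' ∧
      y' (minTime f Ω x' ybar) = ybar ∧
      ∀ t ∈ Icc (0:ℝ) (minTime f Ω x' ybar), ‖y' t - ybar‖ + ‖u' t - ubar‖ ≤ Kr)
    (hA8b : ∀ x' ∈ closedBall ybar r2, ∃ y' u',
      IsAdmissible (fun a b => -f a b) Ω (minTime (fun a b => -f a b) Ω x' ybar) y' u' ∧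
      y' 0 = x' ∧ y' (minTime (fun a b => -f a b) Ω x' ybar) = ybar ∧
      ∀ t ∈ Icc (0:ℝ) (minTime (fun a b => -f a b) Ω x' ybar),
        ‖y' t - ybar‖ + ‖u' t - ubar‖ ≤ Kr)
    :
    atTop.limsup (fun T => ∫ t in (0:ℝ)..T, w (yT T t) (uT T t)) ≤
      vInf f Ω w x + vInf (fun a b => -f a b) Ω w z := by
  have hfc := hf.continuous
  have hwc : Continuous (Function.uncurry w) := hwdef ▸ hf0.continuous.sub continuous_const
  have hbdd : ∀ {y : ℝ → Euc n}, (∀ t, 0 ≤ t → ‖y t‖ ≤ b) → Bornology.IsBounded (y '' Ici 0) :=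
    fun h => isBounded_iff_forall_norm_le.2 ⟨b, forall_mem_image.2 h⟩
  refine le_of_forall_pos_le_add fun ε hε => ?_
  obtain ⟨L₁, y₁, u₁, h₁, hc₁⟩ := exists_isSteering_integral_le hfc hΩcpt hwc hoptf.1
    (hbdd hbndf) hoptf.2.2 (fun δ => hdis.frequently_norm_sub_lt hfc hΩcpt hoptf.1 (hbdd hbndf)
      fun T hT => (abs_le.1 (hcstf T hT)).2)
    (fun η => eventually_exists_isSteering_integral_le hwc hr hτf0 hτfcont hr2 hA8f) (half_pos hε)
  obtain ⟨L₂, y₂, u₂, h₂, hc₂⟩ := exists_isSteering_integral_le hfc.neg hΩcpt hwc hoptb.1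
    (hbdd hbndb) hoptb.2.2 (fun δ => hdis.frequently_norm_sub_lt_of_neg hfc hΩcpt hoptb.1
      (hbdd hbndb) fun T hT => (abs_le.1 (hcstb T hT)).2)
    (fun η => eventually_exists_isSteering_integral_le hwc hr hτb0 hτbcont hr2 hA8b) (half_pos hε)
  refine limsup_le_of_le (isCoboundedUnder_le_of_eventually_le _
    (eventually_atTop.2 ⟨T0, fun T hT => (abs_le.1 (hcstT T hT)).1⟩)) ?_
  filter_upwards [eventually_ge_atTop T0, eventually_ge_atTop (L₁ + L₂), eventually_gt_atTop 0]
    with T hT0 hL hT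
  obtain ⟨hadT, hyT0, hyTT, hvalT⟩ := hoptT T hT0
  have hturnpike := integral_le_add_of_integral_eq_valueFn hfc hΩcpt hf0.continuous hdis hwdef
    hfbar (interior_subset hubar) hT
    ⟨hT.le, hadT, hyT0, hyTT, isBounded_iff_forall_norm_le.2 ⟨b, forall_mem_image.2 (hbndT T hT0)⟩⟩
    hvalT hL (hoptf.2.1 ▸ h₁) ((hoptb.2.1 ▸ h₂).reverse hfc hΩcpt)
  rw [integral_comp_sub_left_self] at hturnpike
  linarith

/-- Step 2 (upper estimate): `limsup_{T→∞} C_T(û_T,x,z) ≤ v_f(x) + v_b(z)`,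
where `C_T(û_T,x,z) = ∫₀ᵀ w(ŷ_T,û_T)` is the shifted optimal cost. -/
theorem shifted_cost_upper_estimate
    {n pp : ℕ} (c : ℝ)
    (f : Euc n → Euc pp → Euc n) (f0 : Euc n → Euc pp → ℝ)
    (Ω : Set (Euc pp))
    -- (A1) regularity of the data
    (hf : ContDiff ℝ 1 (Function.uncurry f))
    (hf0 : ContDiff ℝ 1 (Function.uncurry f0))
    (hΩcpt : IsCompact Ω) (hΩball : Ω ⊆ closedBall 0 c)
    -- static problem and its unique minimizer
    (ybar : Euc n) (ubar : Euc pp) (vbar : ℝ)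
    (hfbar : f ybar ubar = 0) (hvbar : f0 ybar ubar = vbar)
    (hstatmin : ∀ y u, f y u = 0 → vbar ≤ f0 y u)
    (hstatuniq : ∀ y u, f y u = 0 → f0 y u = vbar → y = ybar ∧ u = ubar)
    -- shifted cost
    (w : Euc n → Euc pp → ℝ) (hwdef : w = fun y u => f0 y u - f0 ybar ubar)
    (x z : Euc n)
    -- (A2): existence and uniqueness of optimal solutions
    (T0 : ℝ) (hT0 : 0 < T0)
    (yT : ℝ → ℝ → Euc n) (uT : ℝ → ℝ → Euc pp)
    (yf : ℝ → Euc n) (uf : ℝ → Euc pp) (yb : ℝ → Euc n) (ub : ℝ → Euc pp)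
    (hoptT : ∀ T, T0 ≤ T → IsAdmissible f Ω T (yT T) (uT T) ∧ yT T 0 = x ∧ yT T T = z ∧
      (∫ t in (0:ℝ)..T, f0 (yT T t) (uT T t)) = valueFn f f0 Ω T x z)
    (huniqT : ∀ T, T0 ≤ T → ∀ y' u', IsAdmissible f Ω T y' u' → y' 0 = x → y' T = z →
      (∫ t in (0:ℝ)..T, f0 (y' t) (u' t)) = valueFn f f0 Ω T x z →
      (∀ t ∈ Icc (0:ℝ) T, y' t = yT T t) ∧
      (∀ᵐ t ∂(volume.restrict (Icc (0:ℝ) T)), u' t = uT T t))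
    (hoptf : IsAdmissibleInf f Ω yf uf ∧ yf 0 = x ∧
      Tendsto (fun T => ∫ t in (0:ℝ)..T, w (yf t) (uf t)) atTop (𝓝 (vInf f Ω w x)))
    (huniqf : ∀ y' u', IsAdmissibleInf f Ω y' u' → y' 0 = x →
      Tendsto (fun T => ∫ t in (0:ℝ)..T, w (y' t) (u' t)) atTop (𝓝 (vInf f Ω w x)) →
      (∀ t, 0 ≤ t → y' t = yf t) ∧ (∀ᵐ t ∂(volume.restrict (Ici (0:ℝ))), u' t = uf t))
    (hoptb : IsAdmissibleInf (fun a b => -f a b) Ω yb ub ∧ yb 0 = z ∧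
      Tendsto (fun T => ∫ t in (0:ℝ)..T, w (yb t) (ub t)) atTop
        (𝓝 (vInf (fun a b => -f a b) Ω w z)))
    (huniqb : ∀ y' u', IsAdmissibleInf (fun a b => -f a b) Ω y' u' → y' 0 = z →
      Tendsto (fun T => ∫ t in (0:ℝ)..T, w (y' t) (u' t)) atTop
        (𝓝 (vInf (fun a b => -f a b) Ω w z)) →
      (∀ t, 0 ≤ t → y' t = yb t) ∧ (∀ᵐ t ∂(volume.restrict (Ici (0:ℝ))), u' t = ub t))
    -- (A3): uniform boundedness of the optimal trajectories
    (b : ℝ)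
    (hbndT : ∀ T, T0 ≤ T → ∀ t ∈ Icc (0:ℝ) T, ‖yT T t‖ ≤ b)
    (hbndf : ∀ t, 0 ≤ t → ‖yf t‖ ≤ b)
    (hbndb : ∀ t, 0 ≤ t → ‖yb t‖ ≤ b)
    -- (A4): uniform boundedness of the optimal (shifted) costs
    (M : ℝ)
    (hcstT : ∀ T, T0 ≤ T → |∫ t in (0:ℝ)..T, w (yT T t) (uT T t)| ≤ M)
    (hcstf : ∀ T, 0 ≤ T → |∫ t in (0:ℝ)..T, w (yf t) (uf t)| ≤ M)
    (hcstb : ∀ T, 0 ≤ T → |∫ t in (0:ℝ)..T, w (yb t) (ub t)| ≤ M)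
    -- (A5): the static control is interior
    (hubar : ubar ∈ interior Ω)
    -- (A6): strict dissipativity
    (S : Euc n → ℝ) (α : ℝ → ℝ)
    (hdis : StrictlyDissipative f Ω w ybar ubar S α)
    -- (A7): minimum time functions are finite (and attained) near ȳ, vanish and are continuous at ȳ
    (r : ℝ) (hr : 0 < r)
    (hreachf : ∀ x' ∈ ball ybar r, minTime f Ω x' ybar ∈ reachTimes f Ω x' ybar)
    (hreachb : ∀ x' ∈ ball ybar r,
      minTime (fun a b => -f a b) Ω x' ybar ∈ reachTimes (fun a b => -f a b) Ω x' ybar)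
    (hτf0 : minTime f Ω ybar ybar = 0)
    (hτb0 : minTime (fun a b => -f a b) Ω ybar ybar = 0)
    (hτfcont : ContinuousWithinAt (fun x' => minTime f Ω x' ybar) (ball ybar r) ybar)
    (hτbcont : ContinuousWithinAt (fun x' => minTime (fun a b => -f a b) Ω x' ybar)
      (ball ybar r) ybar)
    -- (A8): local boundedness of the minimum time trajectories and controls near the turnpike
    (r2 Kr : ℝ) (hr2 : 0 < r2) (hKr : 0 < Kr)
    (hA8f : ∀ x' ∈ closedBall ybar r2, ∃ y' u',
      IsAdmissible f Ω (minTime f Ω x' ybar) y' u' ∧ y' 0 = x' ∧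
      y' (minTime f Ω x' ybar) = ybar ∧
      ∀ t ∈ Icc (0:ℝ) (minTime f Ω x' ybar), ‖y' t - ybar‖ + ‖u' t - ubar‖ ≤ Kr)
    (hA8b : ∀ x' ∈ closedBall ybar r2, ∃ y' u',
      IsAdmissible (fun a b => -f a b) Ω (minTime (fun a b => -f a b) Ω x' ybar) y' u' ∧
      y' 0 = x' ∧ y' (minTime (fun a b => -f a b) Ω x' ybar) = ybar ∧
      ∀ t ∈ Icc (0:ℝ) (minTime (fun a b => -f a b) Ω x' ybar),
        ‖y' t - ybar‖ + ‖u' t - ubar‖ ≤ Kr)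
    :
    atTop.limsup (fun T => ∫ t in (0:ℝ)..T, w (yT T t) (uT T t)) ≤
      vInf f Ω w x + vInf (fun a b => -f a b) Ω w z :=
  shifted_cost_upper_estimate_general f f0 Ω hf hf0 hΩcpt ybar ubar hfbar w hwdef x z T0 yT uT yf uf
    yb ub hoptT hoptf hoptb b hbndT hbndf hbndb M hcstT hcstf hcstb hubar S α hdis r hr hτf0 hτb0
    hτfcont hτbcont r2 Kr hr2 hA8f hA8b
end
end

section
/- (Barbalat's lemma) If f : [0,+∞) → ℝ is uniformly continuous and the limit lim_{t→+∞} ∫₀ᵗ f(τ) dτ exists and is finite, then lim_{t→+∞} f(t) = 0. -/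
open Filter Topology Set MeasureTheory

/-!
Uniform continuity makes `f` uniformly close to its forward averages
`d⁻¹ ∫_t^{t+d} f` for a small fixed `d > 0`, while the convergence of `∫_0^t f` forces
every such average, a difference `(∫_0^{t+d} f - ∫_0^t f) / d`, to tend to `0`.
-/

section

variable {E : Type*} [NormedAddCommGroup E] [NormedSpace ℝ E]

theorem norm_sub_average_le [CompleteSpace E] {f : ℝ → E} {t d ε : ℝ} (hd : 0 < d)
    (hf : IntervalIntegrable f volume t (t + d))
    (hε : ∀ s ∈ Ioc t (t + d), ‖f s - f t‖ ≤ ε) :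
    ‖f t - d⁻¹ • ∫ s in t..t + d, f s‖ ≤ ε := by
  have hdiff : f t - d⁻¹ • ∫ s in t..t + d, f s = -(d⁻¹ • ∫ s in t..t + d, (f s - f t)) := by
    rw [intervalIntegral.integral_sub hf intervalIntegrable_const,
      intervalIntegral.integral_const, add_sub_cancel_left, smul_sub, inv_smul_smul₀ hd.ne']
    abel
  have hbound : ‖∫ s in t..t + d, (f s - f t)‖ ≤ ε * d := by
    have := intervalIntegral.norm_integral_le_of_norm_le_const
      (uIoc_of_le (by linarith : t ≤ t + d) ▸ hε)
    rwa [add_sub_cancel_left, abs_of_pos hd] at this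
  rw [hdiff, norm_neg, norm_smul, Real.norm_of_nonneg (inv_nonneg.2 hd.le)]
  calc d⁻¹ * ‖∫ s in t..t + d, (f s - f t)‖ ≤ d⁻¹ * (ε * d) := by gcongr
    _ = ε := by field_simp

theorem UniformContinuousOn.exists_norm_sub_average_le [CompleteSpace E] {f : ℝ → E} {a : ℝ}
    (hf : UniformContinuousOn f (Ici a)) {ε : ℝ} (hε : 0 < ε) :
    ∃ d > 0, ∀ t ≥ a, ‖f t - d⁻¹ • ∫ s in t..t + d, f s‖ ≤ ε := by
  obtain ⟨δ, hδ, hclose⟩ := Metric.uniformContinuousOn_iff.mp hf ε hε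
  refine ⟨δ / 2, half_pos hδ, fun t ht => norm_sub_average_le (half_pos hδ) ?_ ?_⟩
  · refine (hf.continuousOn.mono fun s hs => ?_).intervalIntegrable
    rw [uIcc_of_le (by linarith)] at hs
    exact ht.trans hs.1
  · intro s hs
    have hst : dist s t < δ := by
      rw [Real.dist_eq, abs_of_pos (sub_pos.2 hs.1)]
      linarith [hs.2]
    exact (dist_eq_norm (f s) (f t) ▸ hclose s (ht.trans hs.1.le) t ht hst).le

theorem tendsto_integral_add_of_tendsto_integral {f : ℝ → E} {a : ℝ} {L : E}
    (hf : LocallyIntegrableOn f (Ici a))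
    (hL : Tendsto (fun t => ∫ τ in a..t, f τ) atTop (𝓝 L)) (d : ℝ) :
    Tendsto (fun t => ∫ τ in t..t + d, f τ) atTop (𝓝 0) := by
  have hint : ∀ t ≥ a, IntervalIntegrable f volume a t := fun t ht =>
    (hf.integrableOn_compact_subset (uIcc_of_le ht ▸ Icc_subset_Ici_self)
      isCompact_uIcc).intervalIntegrable
  have hdiff := (hL.comp (tendsto_atTop_add_const_right _ d tendsto_id)).sub hL
  rw [sub_self] at hdiff
  refine hdiff.congr' ?_
  filter_upwards [eventually_ge_atTop a, eventually_ge_atTop (a - d)] with t ht htd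
  exact intervalIntegral.integral_interval_sub_left (hint (t + d) (by linarith)) (hint t ht)

end

/-- **Barbalat's lemma.** If `f : [0,∞) → ℝ` is uniformly continuous and
`∫₀ᵗ f(τ) dτ` has a finite limit as `t → +∞`, then `f(t) → 0` as `t → +∞`. -/
theorem barbalat (f : ℝ → ℝ) (hf : UniformContinuousOn f (Ici 0)) (L : ℝ)
    (hint : Tendsto (fun t => ∫ τ in (0:ℝ)..t, f τ) atTop (𝓝 L)) :
    Tendsto f atTop (𝓝 0) := by
  refine Metric.tendsto_nhds.mpr fun ε hε => ?_
  obtain ⟨d, -, happrox⟩ := hf.exists_norm_sub_average_le (half_pos hε)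
  have havg : Tendsto (fun t => d⁻¹ • ∫ τ in t..t + d, f τ) atTop (𝓝 0) := by
    simpa using (tendsto_integral_add_of_tendsto_integral
      (hf.continuousOn.locallyIntegrableOn measurableSet_Ici) hint d).const_smul d⁻¹
  filter_upwards [eventually_ge_atTop 0, Metric.tendsto_nhds.mp havg _ (half_pos hε)]
    with t ht hsmall
  rw [dist_zero_right] at hsmall ⊢
  calc ‖f t‖ ≤ ‖f t - d⁻¹ • ∫ τ in t..t + d, f τ‖ + ‖d⁻¹ • ∫ τ in t..t + d, f τ‖ :=
        norm_le_norm_sub_add _ _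
    _ < ε := by linarith [happrox t ht]
end

section
/- For each T ≥ T₀ let (ŷ_T,û_T) be an admissible pair on [0,T] for the dynamics f with ŷ_T(0) = x, ŷ_T(T) = z, and assume the shifted costs ∫₀ᵀ w(ŷ_T(t),û_T(t)) dt are bounded uniformly in T ≥ T₀ and that strict dissipativity holds. Then the Cesàro average of the dissipation term vanishes: (1/T)·∫₀ᵀ α(‖(ŷ_T(s)−ȳ, û_T(s)−ū)‖) ds → 0 as T → +∞. -/
open MeasureTheory Filter Topology Metric Set

noncomputable section

/-- The Cesàro average of the dissipation term vanishes:
`(1/T)·∫₀ᵀ α(‖(ŷ_T(s)−ȳ, û_T(s)−ū)‖) ds → 0` as `T → +∞`. -/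
theorem cesaro_dissipation_tendsto_zero
    {n pp : ℕ} (c : ℝ)
    (f : Euc n → Euc pp → Euc n) (f0 : Euc n → Euc pp → ℝ)
    (Ω : Set (Euc pp))
    (hf : ContDiff ℝ 1 (Function.uncurry f))
    (hf0 : ContDiff ℝ 1 (Function.uncurry f0))
    (hΩcpt : IsCompact Ω) (hΩball : Ω ⊆ closedBall 0 c)
    -- (ȳ,ū) is the unique minimizer of the static problem
    (ybar : Euc n) (ubar : Euc pp)
    (hfbar : f ybar ubar = 0)
    (hstatmin : ∀ y u, f y u = 0 → f0 ybar ubar ≤ f0 y u)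
    (hstatuniq : ∀ y u, f y u = 0 → f0 y u = f0 ybar ubar → y = ybar ∧ u = ubar)
    -- shifted cost
    (w : Euc n → Euc pp → ℝ) (hwdef : w = fun y u => f0 y u - f0 ybar ubar)
    (x z : Euc n)
    -- the family of admissible pairs with endpoints x, z
    (T0 : ℝ) (hT0 : 0 < T0)
    (yT : ℝ → ℝ → Euc n) (uT : ℝ → ℝ → Euc pp)
    (hadm : ∀ T, T0 ≤ T → IsAdmissible f Ω T (yT T) (uT T) ∧ yT T 0 = x ∧ yT T T = z)
    -- uniform bound on the shifted costs
    (M : ℝ)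
    (hcst : ∀ T, T0 ≤ T → |∫ t in (0:ℝ)..T, w (yT T t) (uT T t)| ≤ M)
    -- strict dissipativity
    (S : Euc n → ℝ) (α : ℝ → ℝ)
    (hdis : StrictlyDissipative f Ω w ybar ubar S α)
    :
    Tendsto (fun T => (1 / T) * ∫ t in (0:ℝ)..T, α ‖(yT T t - ybar, uT T t - ubar)‖)
      atTop (𝓝 0) := by
  obtain ⟨⟨Ms, hMs⟩, hK, hdiss⟩ := hdis
  set C := 2 * Ms + M with hC
  have hα0 : ∀ T t, 0 ≤ α ‖(yT T t - ybar, uT T t - ubar)‖ := fun T t =>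
    hK.2.2.2 _ (norm_nonneg _)
  have hInt : ∀ T, T0 ≤ T → (∫ t in (0:ℝ)..T, α ‖(yT T t - ybar, uT T t - ubar)‖) ≤ C := by
    intro T hT
    have hTpos : 0 < T := lt_of_lt_of_le hT0 hT
    have h := hdiss T hTpos (yT T) (uT T) (hadm T hT).1
    have hM := abs_le.mp (hcst T hT)
    have h1 := abs_le.mp (hMs (yT T 0))
    have h2 := abs_le.mp (hMs (yT T T))
    simp only [hC]; linarith
  have hnn : ∀ T, T0 ≤ T → 0 ≤ ∫ t in (0:ℝ)..T, α ‖(yT T t - ybar, uT T t - ubar)‖ := by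
    intro T hT
    exact intervalIntegral.integral_nonneg (le_of_lt (lt_of_lt_of_le hT0 hT))
      (fun s _ => hα0 T s)
  have hg : Tendsto (fun T : ℝ => C * T⁻¹) atTop (𝓝 0) := by
    simpa using tendsto_inv_atTop_zero.const_mul C
  apply squeeze_zero' ?_ ?_ hg
  · filter_upwards [eventually_ge_atTop T0] with T hT
    have hTpos : 0 < T := lt_of_lt_of_le hT0 hT
    exact mul_nonneg (by positivity) (hnn T hT)
  · filter_upwards [eventually_ge_atTop T0] with T hT
    have hTpos : 0 < T := lt_of_lt_of_le hT0 hT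
    have := hInt T hT
    rw [one_div, mul_comm C]
    exact mul_le_mul_of_nonneg_left this (by positivity)
end
end

section
/- Let (ŷ_{∞b},û_{∞b}) be an admissible pair on [0,+∞) for the backward dynamics −f (i.e. y(t) = y(0) − ∫₀ᵗ f(y(s),u(s)) ds) with ŷ_{∞b}(0) = z, whose trajectory is bounded (‖ŷ_{∞b}(t)‖ ≤ b for all t ≥ 0) and whose shifted costs ∫₀ᵀ w(ŷ_{∞b}(t),û_{∞b}(t)) dt are bounded uniformly in T ≥ 0. If strict dissipativity holds for the dynamics f, then ŷ_{∞b}(t) → ȳ as t → +∞. -/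
open MeasureTheory Filter Topology Metric Set

noncomputable section

/-!
Reversing time turns the backward pair on `[0,T]` into an admissible pair for `f` from `y(T)` to
`y(0)`, so strict dissipativity bounds `∫₀ᵀ α ‖(y - ȳ, u - ū)‖` by `2 sup |S| + M`, uniformly in
`T`. The trajectory is Lipschitz, its velocity being bounded on the compact set where `(y,u)` lives.
A Barbalat-type argument concludes: each late time at which `y` is `ε`-far from `ȳ` contributes a
fixed positive amount to the tail of the convergent integral `∫₀^∞ α ‖y - ȳ‖`.
-/

open scoped NNReal

section IntegralEquation

variable {E : Type*} [NormedAddCommGroup E]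

theorem intervalIntegrable_of_ae_norm_le {g : ℝ → E}
    (hg : AEStronglyMeasurable g (volume.restrict (Ici 0))) {C : ℝ}
    (hC : ∀ᵐ s, 0 ≤ s → ‖g s‖ ≤ C) {T : ℝ} (hT : 0 ≤ T) :
    IntervalIntegrable g volume 0 T := by
  have hsub : uIoc 0 T ⊆ Ici 0 := by
    rw [uIoc_of_le hT]
    exact Ioc_subset_Icc_self.trans Icc_subset_Ici_self
  refine (intervalIntegrable_const (c := C)).mono_fun' (hg.mono_set hsub) ?_
  filter_upwards [ae_restrict_of_ae hC, ae_restrict_mem measurableSet_uIoc] with s hs hmem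
  exact hs (hsub hmem)

variable [NormedSpace ℝ E]

theorem lipschitzOnWith_of_eq_integral {y g : ℝ → E} {C : ℝ≥0} {S : Set ℝ} (hS : S ⊆ Ici 0)
    (hy : ∀ t ∈ S, y t = y 0 + ∫ s in 0..t, g s) (hC : ∀ᵐ s, 0 ≤ s → ‖g s‖ ≤ C)
    (hint : ∀ t ∈ S, IntervalIntegrable g volume 0 t) : LipschitzOnWith C y S := by
  refine LipschitzOnWith.of_dist_le_mul fun t ht s hs => ?_
  have hdiff : y t - y s = ∫ r in s..t, g r := by
    rw [hy t ht, hy s hs, add_sub_add_left_eq_sub,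
      intervalIntegral.integral_interval_sub_left (hint t ht) (hint s hs)]
  rw [dist_eq_norm, hdiff, Real.dist_eq]
  refine intervalIntegral.norm_integral_le_of_norm_le_const_ae ?_
  filter_upwards [hC] with r hr hmem
  exact hr ((le_min (hS hs) (hS ht)).trans hmem.1.le)

variable [MeasurableSpace E] [BorelSpace E] [SecondCountableTopology E]
  {P : Type*} [TopologicalSpace P] [MeasurableSpace P] [BorelSpace P] [SecondCountableTopology P]

/-- The integral equation does not presuppose integrability (a non-integrable integrand has
integral `0`), so measurability of `y` has to be recovered: `y` is Lipschitz on the interval of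
times up to which the integrand is integrable, and constant beyond it. -/
theorem intervalIntegrable_of_eq_integral_comp {F : E → P → E}
    (hF : Continuous (Function.uncurry F)) {u : ℝ → P} (hu : Measurable u) {y : ℝ → E}
    (hy : ∀ t, 0 ≤ t → y t = y 0 + ∫ s in 0..t, F (y s) (u s)) {C : ℝ≥0}
    (hC : ∀ᵐ s, 0 ≤ s → ‖F (y s) (u s)‖ ≤ C) {T : ℝ} (hT : 0 ≤ T) :
    IntervalIntegrable (fun s => F (y s) (u s)) volume 0 T := by
  set good := {t : ℝ | 0 ≤ t ∧ IntervalIntegrable (fun s => F (y s) (u s)) volume 0 t}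
  have hgood : good.OrdConnected := ⟨fun _ ht _ hr x hx =>
    ⟨ht.1.trans hx.1,
      hr.2.mono_set (uIcc_subset_uIcc_left (mem_uIcc_of_le (ht.1.trans hx.1) hx.2))⟩⟩
  have hgood_sub : good ⊆ Ici 0 := fun t ht => ht.1
  have hmeas : AEMeasurable y (volume.restrict (Ici 0)) := by
    rw [← union_sdiff_cancel hgood_sub, aemeasurable_union_iff]
    refine ⟨(lipschitzOnWith_of_eq_integral hgood_sub (fun t ht => hy t ht.1) hC
      fun t ht => ht.2).continuousOn.aemeasurable hgood.measurableSet,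
      (aemeasurable_const (b := y 0)).congr ?_⟩
    filter_upwards [ae_restrict_mem (measurableSet_Ici.diff hgood.measurableSet)]
      with t ⟨ht0, hbad⟩
    rw [hy t ht0, intervalIntegral.integral_undef fun h => hbad ⟨ht0, h⟩, add_zero]
  exact intervalIntegrable_of_ae_norm_le
    (hF.measurable.comp_aemeasurable (hmeas.prodMk hu.aemeasurable)).aestronglyMeasurable hC hT

end IntegralEquation

theorem integrableOn_Ioi_of_nonneg_of_intervalIntegral_le {g : ℝ → ℝ} {B : ℝ}
    (hg0 : ∀ t, 0 ≤ g t) (hint : ∀ T, 0 ≤ T → IntervalIntegrable g volume 0 T)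
    (hB : ∀ T, 0 < T → ∫ t in 0..T, g t ≤ B) : IntegrableOn g (Ioi 0) := by
  refine integrableOn_Ioi_of_intervalIntegral_norm_bounded B 0 (b := ((↑) : ℕ → ℝ))
    (fun i => (hint i i.cast_nonneg).1) tendsto_natCast_atTop_atTop
    (eventually_atTop.2 ⟨1, fun i hi => ?_⟩)
  simp_rw [Real.norm_of_nonneg (hg0 _)]
  exact hB i (Nat.cast_pos.2 hi)

theorem tendsto_of_uniformContinuousOn_of_integrableOn_Ioi {X : Type*} [PseudoMetricSpace X]
    {y : ℝ → X} {x₀ : X} {α g : ℝ → ℝ} (hy : UniformContinuousOn y (Ici 0))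
    (hg : IntegrableOn g (Ioi 0)) (hα_mono : MonotoneOn α (Ici 0))
    (hα_pos : ∀ s, 0 < s → 0 < α s) (hgα : ∀ t, 0 ≤ t → α (dist (y t) x₀) ≤ g t) :
    Tendsto y atTop (𝓝 x₀) := by
  rw [Metric.tendsto_atTop]
  intro ε hε
  obtain ⟨δ, hδ, hyδ⟩ := Metric.uniformContinuousOn_iff.1 hy (ε / 2) (half_pos hε)
  have hint : ∀ t, 0 ≤ t → IntervalIntegrable g volume 0 t := fun t ht =>
    (intervalIntegrable_iff_integrableOn_Ioc_of_le ht).2 (hg.mono_set Ioc_subset_Ioi_self)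
  have hwindow : Tendsto (fun t => ∫ s in t..t + δ / 2, g s) atTop (𝓝 0) := by
    have hlim := intervalIntegral_tendsto_integral_Ioi 0 hg tendsto_id
    have hshift := intervalIntegral_tendsto_integral_Ioi 0 hg
      (tendsto_atTop_add_const_right _ (δ / 2) tendsto_id)
    refine (sub_self (∫ x in Ioi 0, g x) ▸ hshift.sub hlim).congr' ?_
    filter_upwards [eventually_ge_atTop 0] with t ht
    exact intervalIntegral.integral_interval_sub_left (hint _ (by positivity)) (hint t ht)
  obtain ⟨N, hN⟩ := eventually_atTop.1
    (hwindow.eventually_lt_const (mul_pos (half_pos hδ) (hα_pos _ (half_pos hε))))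
  refine ⟨max N 0, fun t ht => ?_⟩
  have ht0 : 0 ≤ t := (le_max_right N 0).trans ht
  by_contra! hfar
  have hlow : ∀ s ∈ Icc t (t + δ / 2), α (ε / 2) ≤ g s := fun s hs => by
    have hs0 : 0 ≤ s := ht0.trans hs.1
    have hclose : dist (y t) (y s) < ε / 2 := hyδ t ht0 s hs0 (by
      rw [Real.dist_eq, abs_sub_lt_iff]; constructor <;> linarith [hs.1, hs.2])
    have hfar_s : ε / 2 ≤ dist (y s) x₀ := by linarith [dist_triangle (y t) (y s) x₀]
    exact (hα_mono (le_of_lt (half_pos hε)) (hfar_s.trans' (half_pos hε).le) hfar_s).trans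
      (hgα s hs0)
  have := intervalIntegral.integral_mono_on (by linarith) intervalIntegrable_const
    (hint (t + δ / 2) (by positivity) |>.mono_set ?_) hlow
  · rw [intervalIntegral.integral_const, smul_eq_mul, add_sub_cancel_left] at this
    linarith [hN t ((le_max_left N 0).trans ht)]
  · rw [uIcc_of_le (by linarith), uIcc_of_le (by positivity)]
    exact Icc_subset_Icc_left ht0

namespace IsClassK

variable {α : ℝ → ℝ}

theorem monotoneOn (hα : IsClassK α) : MonotoneOn α (Ici 0) := hα.2.1.monotoneOn

theorem nonneg (hα : IsClassK α) {s : ℝ} (hs : 0 ≤ s) : 0 ≤ α s := hα.2.2.2 s hs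

theorem pos_s7 (hα : IsClassK α) {s : ℝ} (hs : 0 < s) : 0 < α s :=
  hα.2.2.1 ▸ hα.2.1 self_mem_Ici hs.le hs

theorem intervalIntegrable_comp (hα : IsClassK α) {r : ℝ → ℝ}
    (hr : AEMeasurable r (volume.restrict (Ici 0))) (hr0 : ∀ t, 0 ≤ r t) {R : ℝ}
    (hR : ∀ᵐ t, 0 ≤ t → r t ≤ R) {T : ℝ} (hT : 0 ≤ T) :
    IntervalIntegrable (fun t => α (r t)) volume 0 T := by
  have hext : Continuous fun s => α (max s 0) :=
    hα.1.comp_continuous (continuous_id.max continuous_const) fun s => le_max_right s 0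
  have heq : (fun t => α (r t)) = fun t => α (max (r t) 0) :=
    funext fun t => by rw [max_eq_left (hr0 t)]
  refine intervalIntegrable_of_ae_norm_le (C := α R) ?_ ?_ hT
  · rw [heq]
    exact (hext.measurable.comp_aemeasurable hr).aestronglyMeasurable
  · filter_upwards [hR] with t ht ht0
    rw [Real.norm_of_nonneg (hα.nonneg (hr0 t))]
    exact hα.monotoneOn (hr0 t) ((hr0 t).trans (ht ht0)) (ht ht0)

end IsClassK

section Admissible

variable {n p : ℕ} {f : Euc n → Euc p → Euc n} {Ω : Set (Euc p)} {y : ℝ → Euc n}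
  {u : ℝ → Euc p}

theorem IsAdmissibleInf.ae_mem (hadm : IsAdmissibleInf f Ω y u) : ∀ᵐ t, 0 ≤ t → u t ∈ Ω :=
  (ae_restrict_iff' measurableSet_Ici).1 hadm.2.1

theorem IsAdmissibleInf.exists_lipschitzOnWith (hadm : IsAdmissibleInf f Ω y u)
    (hf : Continuous (Function.uncurry f)) {c : ℝ} (hΩ : Ω ⊆ closedBall 0 c) {b : ℝ}
    (hy : ∀ t, 0 ≤ t → ‖y t‖ ≤ b) :
    ∃ C : ℝ≥0, (∀ T, 0 ≤ T → IntervalIntegrable (fun s => f (y s) (u s)) volume 0 T) ∧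
      LipschitzOnWith C y (Ici 0) := by
  obtain ⟨C, hC⟩ := ((isCompact_closedBall (0 : Euc n) b).prod
    (isCompact_closedBall (0 : Euc p) c)).exists_bound_of_continuousOn hf.continuousOn
  have hF : ∀ᵐ t, 0 ≤ t → ‖f (y t) (u t)‖ ≤ C.toNNReal := hadm.ae_mem.mono fun t ht ht0 =>
    (hC (y t, u t) ⟨mem_closedBall_zero_iff.2 (hy t ht0), hΩ (ht ht0)⟩).trans
      (Real.le_coe_toNNReal C)
  have hint : ∀ T, 0 ≤ T → IntervalIntegrable (fun s => f (y s) (u s)) volume 0 T :=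
    fun _ => intervalIntegrable_of_eq_integral_comp hf hadm.1 hadm.2.2 hF
  exact ⟨C.toNNReal, hint, lipschitzOnWith_of_eq_integral subset_rfl hadm.2.2 hF hint⟩

theorem IsAdmissibleInf.isAdmissible_reverse (hadm : IsAdmissibleInf (fun a b => -f a b) Ω y u)
    (hint : ∀ T, 0 ≤ T → IntervalIntegrable (fun s => -f (y s) (u s)) volume 0 T) {T : ℝ}
    (hT : 0 ≤ T) : IsAdmissible f Ω T (fun t => y (T - t)) (fun t => u (T - t)) := by
  refine ⟨hadm.1.comp (measurable_const.sub measurable_id), ?_, fun t ht => ?_⟩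
  · have hrev := (Measure.measurePreserving_sub_left volume T).quasiMeasurePreserving.ae
      hadm.ae_mem
    filter_upwards [ae_restrict_of_ae hrev, ae_restrict_mem measurableSet_Icc] with t ht hmem
    exact ht (sub_nonneg.2 hmem.2)
  · have hy := hadm.2.2
    have hTt : 0 ≤ T - t := sub_nonneg.2 ht.2
    have hsplit := intervalIntegral.integral_interval_sub_left (hint T hT) (hint (T - t) hTt)
    beta_reduce at hy
    simp only [sub_zero]
    rw [intervalIntegral.integral_comp_sub_left (fun s => f (y s) (u s)), sub_zero,
      hy (T - t) hTt, hy T hT, ← neg_neg (∫ s in T - t..T, f (y s) (u s)),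
      ← intervalIntegral.integral_neg, ← hsplit]
    abel

variable {w : Euc n → Euc p → ℝ} {ybar : Euc n} {ubar : Euc p} {S : Euc n → ℝ} {α : ℝ → ℝ}

theorem StrictlyDissipative.le_of_isAdmissibleInf_neg
    (hdis : StrictlyDissipative f Ω w ybar ubar S α)
    (hadm : IsAdmissibleInf (fun a b => -f a b) Ω y u)
    (hint : ∀ T, 0 ≤ T → IntervalIntegrable (fun s => -f (y s) (u s)) volume 0 T) {T : ℝ}
    (hT : 0 < T) :
    S (y 0) + ∫ t in 0..T, α ‖(y t - ybar, u t - ubar)‖ ≤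
      S (y T) + ∫ t in 0..T, w (y t) (u t) := by
  have := hdis.2.2 T hT _ _ (hadm.isAdmissible_reverse hint hT.le)
  simpa only [sub_zero, sub_self,
    intervalIntegral.integral_comp_sub_left (fun t => α ‖(y t - ybar, u t - ubar)‖),
    intervalIntegral.integral_comp_sub_left (fun t => w (y t) (u t))] using this

end Admissible

theorem infinite_horizon_backward_trajectory_tendsto_turnpike_general
    {n pp : ℕ} (c : ℝ)
    (f : Euc n → Euc pp → Euc n)
    (Ω : Set (Euc pp))
    (hf : ContDiff ℝ 1 (Function.uncurry f))
    (hΩball : Ω ⊆ closedBall 0 c)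
    (ybar : Euc n) (ubar : Euc pp)
    -- shifted cost
    (w : Euc n → Euc pp → ℝ)
    (yb : ℝ → Euc n) (ub : ℝ → Euc pp)
    (hadm : IsAdmissibleInf (fun a b => -f a b) Ω yb ub)
    (b : ℝ) (hbnd : ∀ t, 0 ≤ t → ‖yb t‖ ≤ b)
    (M : ℝ) (hcst : ∀ T, 0 ≤ T → |∫ t in (0:ℝ)..T, w (yb t) (ub t)| ≤ M)
    (S : Euc n → ℝ) (α : ℝ → ℝ)
    (hdis : StrictlyDissipative f Ω w ybar ubar S α) :
    Tendsto yb atTop (𝓝 ybar) := by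
  obtain ⟨⟨Ms, hMs⟩, hα, -⟩ := id hdis
  obtain ⟨C, hint, hlip⟩ := hadm.exists_lipschitzOnWith hf.continuous.neg hΩball hbnd
  set gap := fun t => (yb t - ybar, ub t - ubar)
  have hgap_le : ∀ᵐ t, 0 ≤ t → ‖gap t‖ ≤ max (b + ‖ybar‖) (c + ‖ubar‖) :=
    hadm.ae_mem.mono fun t ht ht0 => max_le_max
      ((norm_sub_le _ _).trans (add_le_add_left (hbnd t ht0) _))
      ((norm_sub_le _ _).trans (add_le_add_left (mem_closedBall_zero_iff.1 (hΩball (ht ht0))) _))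
  have hgap_int : ∀ T, 0 ≤ T → IntervalIntegrable (fun t => α ‖gap t‖) volume 0 T :=
    fun _ => hα.intervalIntegrable_comp ((((hlip.continuousOn.aemeasurable measurableSet_Ici).sub
      aemeasurable_const).prodMk (hadm.1.aemeasurable.sub aemeasurable_const)).norm)
      (fun _ => norm_nonneg _) hgap_le
  have hgap_bound : ∀ T, 0 < T → ∫ t in 0..T, α ‖gap t‖ ≤ 2 * Ms + M := fun T hT => by
    linarith [hdis.le_of_isAdmissibleInf_neg hadm hint hT, (abs_le.1 (hMs (yb 0))).1,
      (abs_le.1 (hMs (yb T))).2, (le_abs_self _).trans (hcst T hT.le)]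
  refine tendsto_of_uniformContinuousOn_of_integrableOn_Ioi hlip.uniformContinuousOn
    (integrableOn_Ioi_of_nonneg_of_intervalIntegral_le (fun _ => hα.nonneg (norm_nonneg _))
      hgap_int hgap_bound) hα.monotoneOn (fun _ => hα.pos_s7) fun t _ => ?_
  rw [dist_eq_norm]
  exact hα.monotoneOn (norm_nonneg _) (norm_nonneg _) (norm_fst_le (gap t))

/-- Corollary 5.6: the same convergence holds for a bounded admissible trajectory
of the backward-in-time dynamics `−f` with uniformly bounded shifted costs. -/
theorem infinite_horizon_backward_trajectory_tendsto_turnpike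
    {n pp : ℕ} (c : ℝ)
    (f : Euc n → Euc pp → Euc n) (f0 : Euc n → Euc pp → ℝ)
    (Ω : Set (Euc pp))
    (hf : ContDiff ℝ 1 (Function.uncurry f))
    (hf0 : ContDiff ℝ 1 (Function.uncurry f0))
    (hΩcpt : IsCompact Ω) (hΩball : Ω ⊆ closedBall 0 c)
    -- (ȳ,ū) is the unique minimizer of the static problem
    (ybar : Euc n) (ubar : Euc pp)
    (hfbar : f ybar ubar = 0)
    (hstatmin : ∀ y u, f y u = 0 → f0 ybar ubar ≤ f0 y u)
    (hstatuniq : ∀ y u, f y u = 0 → f0 y u = f0 ybar ubar → y = ybar ∧ u = ubar)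
    -- shifted cost
    (w : Euc n → Euc pp → ℝ) (hwdef : w = fun y u => f0 y u - f0 ybar ubar)
    (z : Euc n)
    (yb : ℝ → Euc n) (ub : ℝ → Euc pp)
    (hadm : IsAdmissibleInf (fun a b => -f a b) Ω yb ub) (hz0 : yb 0 = z)
    (b : ℝ) (hbnd : ∀ t, 0 ≤ t → ‖yb t‖ ≤ b)
    (M : ℝ) (hcst : ∀ T, 0 ≤ T → |∫ t in (0:ℝ)..T, w (yb t) (ub t)| ≤ M)
    (S : Euc n → ℝ) (α : ℝ → ℝ)
    (hdis : StrictlyDissipative f Ω w ybar ubar S α) :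
    Tendsto yb atTop (𝓝 ybar) :=
  infinite_horizon_backward_trajectory_tendsto_turnpike_general c f Ω hf hΩball ybar ubar w yb ub
    hadm b hbnd M hcst S α hdis
end
end
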